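/- arXiv:2312.16816 — 5 statements merged into one kernel-verified Lean document; each statement's English description precedes it below -/
import Mathlib

section
/- A holomorphic function F on the space of n×n complex matrices satisfying F(u⁻¹ z u) = F(z) for all unitary u and all z, in fact satisfies F(g⁻¹ z g) = F(z) for all invertible complex matrices g and all z. -/
/-!
For fixed `z`, the holomorphic map `x ↦ F (exp (-x) * z * exp x)` is constant on the
skew-Hermitian matrices, whose exponentials are unitary. These form a real subspace whose
complexification is all of `M_n(ℂ)`, so the map is constant everywhere (the unitarian trick).
Hence the invertible `g` with `F (g⁻¹ * z * g) = F z` for all `z` form a subgroup containing the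
image of `exp`, a neighbourhood of `1`. An open subgroup is closed, so it is all of `GL_n(ℂ)`,
which is connected.
-/

open Filter Topology NormedSpace Polynomial ComplexStarModule

theorem Differentiable.eq_of_forall_ofReal_eq {E : Type*} [NormedAddCommGroup E]
    [NormedSpace ℂ E] [CompleteSpace E] {f : ℂ → E} (hf : Differentiable ℂ f) {c : E}
    (h : ∀ r : ℝ, f r = c) (z : ℂ) : f z = c := by
  have hreal : Tendsto ((↑) : ℝ → ℂ) (𝓝[≠] 0) (𝓝[≠] 0) :=
    tendsto_nhdsWithin_of_tendsto_nhds_of_eventually_within _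
      (Complex.continuous_ofReal.tendsto' 0 0 Complex.ofReal_zero |>.mono_left nhdsWithin_le_nhds)
      (eventually_nhdsWithin_of_forall fun r hr ↦ by simpa using hr)
  exact AnalyticOnNhd.eqOn_of_preconnected_of_frequently_eq (fun w _ ↦ hf.analyticAt w)
    analyticOnNhd_const isPreconnected_univ (Set.mem_univ 0)
    (hreal.frequently (Frequently.of_forall h)) (Set.mem_univ z)

section StarModule

variable {A E : Type*} [NormedAddCommGroup A] [NormedSpace ℂ A] [StarAddMonoid A]
  [StarModule ℂ A] [NormedAddCommGroup E] [NormedSpace ℂ E] [CompleteSpace E] {G : A → E}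

theorem Differentiable.eq_of_forall_isSelfAdjoint_eq (hG : Differentiable ℂ G) {c : E}
    (h : ∀ a, IsSelfAdjoint a → G a = c) (x : A) : G x = c := by
  have hline : Differentiable ℂ fun t : ℂ ↦ G ((ℜ x : A) + t • (ℑ x : A)) := by fun_prop
  rw [← realPart_add_I_smul_imaginaryPart x]
  refine hline.eq_of_forall_ofReal_eq (fun r ↦ h _ ?_) Complex.I
  rw [Complex.coe_smul]
  exact (ℜ x + r • ℑ x).2

theorem Differentiable.eq_of_forall_mem_skewAdjoint_eq (hG : Differentiable ℂ G) {c : E}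
    (h : ∀ a ∈ skewAdjoint A, G a = c) (x : A) : G x = c := by
  have hI : Differentiable ℂ fun a : A ↦ G (Complex.I • a) := by fun_prop
  have := hI.eq_of_forall_isSelfAdjoint_eq
    (fun a ha ↦ h _ (Complex.I_smul_mem_skewAdjoint_iff_isSelfAdjoint.2 ha)) (-Complex.I • x)
  rwa [smul_smul, mul_neg, Complex.I_mul_I, neg_neg, one_smul] at this

end StarModule

def Units.conjStabilizer {R β : Type*} [Monoid R] (F : R → β) : Subgroup Rˣ where
  carrier := {g | ∀ z, F (↑g⁻¹ * z * ↑g) = F z}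
  one_mem' := by simp
  mul_mem' {g h} hg hh z := by
    simpa only [mul_inv_rev, Units.val_mul, mul_assoc] using
      (hh (↑g⁻¹ * z * ↑g)).trans (hg z)
  inv_mem' {g} hg z := by
    simpa [mul_assoc] using (hg (↑g * z * ↑g⁻¹)).symm

theorem Subgroup.eq_top_of_mem_nhds_one {G : Type*} [Group G] [TopologicalSpace G]
    [IsTopologicalGroup G] [ConnectedSpace G] (H : Subgroup G) (hH : (H : Set G) ∈ 𝓝 1) :
    H = ⊤ := by
  have hopen := H.isOpen_of_mem_nhds hH
  rw [← SetLike.coe_set_eq, coe_top]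
  exact IsClopen.eq_univ ⟨H.isClosed_of_isOpen hopen, hopen⟩ ⟨1, H.one_mem⟩

section Exp

variable {A : Type*} [NormedRing A] [NormedAlgebra ℝ A] [CompleteSpace A]

theorem range_exp_mem_nhds_one : Set.range (exp : A → A) ∈ 𝓝 1 := by
  have hmap := (hasStrictFDerivAt_exp_zero (𝕂 := ℝ) (𝔸 := A)).map_nhds_eq_of_equiv
    (f' := ContinuousLinearEquiv.refl ℝ A)
  rw [exp_zero] at hmap
  rw [← hmap]
  exact range_mem_map

theorem Units.conjStabilizer_mem_nhds_one {β : Type*} {F : A → β}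
    (hF : ∀ x z, F (exp (-x) * z * exp x) = F z) : (conjStabilizer F : Set Aˣ) ∈ 𝓝 1 := by
  let +nondep : NormedAlgebra ℚ A := .restrictScalars ℚ ℝ A
  refine mem_of_superset (continuous_val.tendsto 1 range_exp_mem_nhds_one) ?_
  rintro g ⟨x, hx⟩ z
  rw [← Ring.inverse_unit, ← hx, Ring.inverse_exp]
  exact hF x z

end Exp

section CStar

variable {A E : Type*} [NormedRing A] [NormedAlgebra ℂ A] [CompleteSpace A] [StarRing A]
  [StarModule ℂ A] [ContinuousStar A] [NormedAddCommGroup E] [NormedSpace ℂ E] [CompleteSpace E]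
  {F : A → E}

theorem apply_exp_neg_mul_mul_exp_eq (hF : Differentiable ℂ F)
    (hU : ∀ u ∈ unitary A, ∀ z, F (star u * z * u) = F z) (x z : A) :
    F (exp (-x) * z * exp x) = F z := by
  let +nondep : NormedAlgebra ℚ A := .restrictScalars ℚ ℂ A
  have hexp : Differentiable ℂ (exp : A → A) := fun y ↦
    (exp_analytic (𝕂 := ℂ) y).differentiableAt
  have hG : Differentiable ℂ fun y : A ↦ F (exp (-y) * z * exp y) := by fun_prop
  refine hG.eq_of_forall_mem_skewAdjoint_eq (fun y hy ↦ ?_) x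
  have := hU _ (exp_mem_unitary_of_mem_skewAdjoint hy) z
  rwa [star_exp, skewAdjoint.mem_iff.1 hy] at this

theorem Units.conjStabilizer_eq_top_of_unitary [ConnectedSpace Aˣ] (hF : Differentiable ℂ F)
    (hU : ∀ u ∈ unitary A, ∀ z, F (star u * z * u) = F z) : conjStabilizer F = ⊤ :=
  (conjStabilizer F).eq_top_of_mem_nhds_one
    (conjStabilizer_mem_nhds_one (apply_exp_neg_mul_mul_exp_eq hF hU))

end CStar

namespace Matrix

variable {n : Type*} [Fintype n] [DecidableEq n]

theorem finite_setOf_det_lineMap_eq_zero {K : Type*} [Field K] {A B : Matrix n n K}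
    (hB : B.det ≠ 0) : {t : K | (AffineMap.lineMap A B t).det = 0}.Finite := by
  set P : K[X] := (A.map C + (X : K[X]) • (B - A).map C).det with hP_def
  have hP : ∀ t, P.eval t = (AffineMap.lineMap A B t).det := by
    intro t
    rw [hP_def, ← coe_evalRingHom, RingHom.map_det, AffineMap.lineMap_apply_module']
    congr 1
    ext i j
    simp [add_comm]
  have hP0 : P ≠ 0 := fun h ↦ hB (by simpa [h] using (hP 1).symm)
  simpa [← hP] using finite_setOfPred_isRoot hP0

/-- Any `g` is joined to `1` inside `GL n ℂ` along the complex line through `1` and `g`, which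
meets the singular matrices in finitely many points only. -/
instance GeneralLinearGroup.connectedSpace_complex : ConnectedSpace (GL n ℂ) := by
  refine connectedSpace_iff_univ.2 ⟨⟨1, trivial⟩, isPreconnected_of_forall 1 fun g _ ↦ ?_⟩
  let line : ℂ → Matrix n n ℂ := AffineMap.lineMap 1 (g : Matrix n n ℂ)
  let C := {t : ℂ | (line t).det = 0}ᶜ
  have hC : IsPreconnected C :=
    ((finite_setOf_det_lineMap_eq_zero g.det_ne_zero).countable
      |>.isPathConnected_compl_of_one_lt_rank (by simp [Complex.rank_real_complex]))
      |>.isConnected.isPreconnected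
  have := Subtype.preconnectedSpace hC
  let path : C → GL n ℂ := fun t ↦ mkOfDetNeZero _ t.2
  have hline : Continuous fun t : C ↦ line t :=
    AffineMap.lineMap_continuous.comp continuous_subtype_val
  have hinv : (fun t : C ↦ ((path t)⁻¹ : GL n ℂ).val) = fun t : C ↦ (line t)⁻¹ :=
    funext fun t ↦ coe_units_inv _
  have hpath : Continuous path := by
    refine Units.continuous_iff.2 ⟨hline, hinv ▸ continuous_iff_continuousAt.2 fun t ↦ ?_⟩
    refine (continuousAt_matrix_inv _ ?_).comp hline.continuousAt
    rw [Ring.inverse_eq_inv']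
    exact continuousAt_inv₀ t.2
  refine ⟨Set.range path, Set.subset_univ _, ⟨⟨0, by simp [C, line]⟩, ?_⟩,
    ⟨⟨1, by simp [C, line, g.det_ne_zero]⟩, ?_⟩, isPreconnected_range hpath⟩
  all_goals ext; simp [path, line]

end Matrix

/-- A holomorphic function on `M_n(ℂ)` invariant under conjugation by all unitary
matrices is invariant under conjugation by all invertible matrices. -/
theorem unitary_invariant_holomorphic_is_GL_invariant (n : ℕ)
    (F : Matrix (Fin n) (Fin n) ℂ → ℂ) (hF : Differentiable ℂ F)
    (hU : ∀ u : Matrix.unitaryGroup (Fin n) ℂ, ∀ z,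
      F ((↑(u⁻¹) : Matrix (Fin n) (Fin n) ℂ) * z * (↑u : Matrix (Fin n) (Fin n) ℂ)) = F z) :
    ∀ g : Matrix.GeneralLinearGroup (Fin n) ℂ, ∀ z,
      F ((↑(g⁻¹) : Matrix (Fin n) (Fin n) ℂ) * z * (↑g : Matrix (Fin n) (Fin n) ℂ)) = F z := by
  -- The operator norm leaves the topology, hence `Differentiable ℂ F`, unchanged.
  let : CStarAlgebra (Matrix (Fin n) (Fin n) ℂ) := Matrix.instCStarAlgebra
  have hstab := Units.conjStabilizer_eq_top_of_unitary hF fun u hu z ↦ by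
    simpa [← Unitary.star_eq_inv] using hU ⟨u, hu⟩ z
  intro g
  exact (hstab ▸ Subgroup.mem_top g : g ∈ Units.conjStabilizer F)
end

section
/- The family (1/√(n!(λ+δ)!)) a_{λ+δ}, indexed by partitions λ with at most n parts, is an orthonormal family with dense span in the space of alternating functions in the Segal-Bargmann space of ℂⁿ; equivalently, any alternating polynomial orthogonal to all a_{λ+δ} is zero, and ⟨a_{λ+δ}, a_{μ+δ}⟩ = δ_{λμ} · n!(λ+δ)! in the Segal-Bargmann inner product. -/
open MvPolynomial

/-- The constant-coefficient differential operator `∂^μ = ∏ i, (∂/∂zᵢ)^(μ i)`. -/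
noncomputable def diffOp {σ : Type*} [Fintype σ] [DecidableEq σ] (μ : σ →₀ ℕ) :
    MvPolynomial σ ℂ →ₗ[ℂ] MvPolynomial σ ℂ :=
  (Finset.univ.toList.map fun i : σ => ((pderiv i : Derivation ℂ _ _).toLinearMap) ^ (μ i)).prod

/-- For `F = Σ c_μ z^μ`, the polynomial `F(∂)G = Σ c_μ ∂^μ G`. -/
noncomputable def applyDiff {σ : Type*} [Fintype σ] [DecidableEq σ]
    (F G : MvPolynomial σ ℂ) : MvPolynomial σ ℂ :=
  ∑ μ ∈ F.support, coeff μ F • (diffOp μ G)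

/-- The Segal–Bargmann (Fischer) inner product on polynomials,
conjugate-linear in the first argument, with `⟨z^μ, z^ν⟩ = δ_{μν} μ!`. -/
noncomputable def fischer {n : ℕ} (F G : MvPolynomial (Fin n) ℂ) : ℂ :=
  eval (0 : Fin n → ℂ) (applyDiff (MvPolynomial.map (starRingEnd ℂ) F) G)

/-- `a_ν(z) = det [zᵢ^(ν_j)]`. -/
noncomputable def aDet (n : ℕ) (ν : Fin n → ℕ) : MvPolynomial (Fin n) ℂ :=
  (Matrix.of fun i j : Fin n => (X i : MvPolynomial (Fin n) ℂ) ^ (ν j)).det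

/-- `λ + δ` where `δ = (n-1, n-2, …, 0)`. -/
def shiftedExp (n : ℕ) (lam : Fin n → ℕ) : Fin n → ℕ := fun j => lam j + (n - 1 - (j : ℕ))

/-!
Expanding `F(∂)` on monomials gives `⟨F, G⟩ = ∑ μ, conj (F_μ) G_μ μ!`, and
`a_ν = ∑ σ, sgn σ z^(ν ∘ σ)`. The coefficients of an alternating `G` satisfy
`G_(ν ∘ σ) = sgn σ G_ν`, so `⟨a_ν, G⟩ = n! ν! G_ν`. With `G = a_(μ+δ)` this gives the
orthogonality relations, because a strictly decreasing exponent occurs in `a_(μ+δ)` only as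
`μ + δ` itself. For density, an alternating `F` has no coefficient at an exponent with a
repeated entry, and any other exponent is a permutation of a strictly decreasing one, that is
of some `λ + δ`; there `⟨a_(λ+δ), F⟩ = 0` kills the coefficient.
-/

section DiffOp

variable {ι R : Type*} [CommSemiring R]

theorem pderiv_pow_monomial (i : ι) (k : ℕ) (ν : ι →₀ ℕ) (c : R) :
    ((pderiv i : Derivation R (MvPolynomial ι R) _).toLinearMap ^ k) (monomial ν c) =
      monomial (ν - Finsupp.single i k) (c * (ν i).descFactorial k) := by
  induction k with
  | zero => simp
  | succ k ih =>
    rw [pow_succ', Module.End.mul_apply, ih]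
    change pderiv i _ = _
    rw [pderiv_monomial, tsub_tsub, ← Finsupp.single_add, Finsupp.tsub_apply,
      Finsupp.single_eq_same, Nat.descFactorial_succ]
    congr 1
    push_cast
    ring

theorem list_prod_pderiv_pow_monomial (μ ν : ι →₀ ℕ) (c : R) {l : List ι} (hl : l.Nodup) :
    (l.map fun i => (pderiv i : Derivation R (MvPolynomial ι R) _).toLinearMap ^ μ i).prod
        (monomial ν c) =
      monomial (ν - (l.map fun i => Finsupp.single i (μ i)).sum)
        (c * (l.map fun i => ((ν i).descFactorial (μ i) : R)).prod) := by
  induction l with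
  | nil => simp
  | cons a l ih =>
    obtain ⟨ha, hl⟩ := List.nodup_cons.mp hl
    have hla : (l.map fun i => Finsupp.single i (μ i)).sum a = 0 := by
      rw [← Finsupp.applyAddHom_apply, map_list_sum, List.map_map]
      exact List.sum_eq_zero fun x hx => by
        obtain ⟨i, hi, rfl⟩ := List.mem_map.mp hx
        simp [ne_of_mem_of_not_mem hi ha]
    simp only [List.map_cons, List.prod_cons, List.sum_cons, Module.End.mul_apply, ih hl,
      pderiv_pow_monomial, Finsupp.tsub_apply, hla, tsub_zero, tsub_tsub, add_comm]
    congr 1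
    ring

end DiffOp

section Fischer

variable {ι : Type*} [Fintype ι] [DecidableEq ι]

theorem diffOp_monomial (μ ν : ι →₀ ℕ) (c : ℂ) :
    diffOp μ (monomial ν c) = monomial (ν - μ) (c * ∏ i, ((ν i).descFactorial (μ i) : ℂ)) := by
  rw [diffOp, list_prod_pderiv_pow_monomial μ ν c Finset.univ.nodup_toList,
    Finset.sum_map_toList, Finset.prod_map_toList, Finsupp.univ_sum_single]

theorem constantCoeff_diffOp (μ : ι →₀ ℕ) (G : MvPolynomial ι ℂ) :
    constantCoeff (diffOp μ G) = coeff μ G * ∏ i, ((μ i).factorial : ℂ) := by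
  induction G using MvPolynomial.induction_on' with
  | monomial ν c =>
    rw [diffOp_monomial, constantCoeff_monomial, coeff_monomial]
    by_cases hνμ : ν = μ
    · simp [hνμ, Nat.descFactorial_self]
    -- if `ν - μ = 0` but `ν ≠ μ`, then some `ν i < μ i` and `(ν i).descFactorial (μ i) = 0`
    have hle : ν - μ = 0 → ∏ i, ((ν i).descFactorial (μ i) : ℂ) = 0 := fun h => by
      obtain ⟨i, hi⟩ : ∃ i, ν i < μ i := by
        by_contra! hge
        exact hνμ (le_antisymm (tsub_eq_zero_iff_le.mp h) hge)
      exact Finset.prod_eq_zero (Finset.mem_univ i)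
        (by simp [Nat.descFactorial_eq_zero_iff_lt.mpr hi])
    by_cases h : ν - μ = 0 <;> simp [hνμ, h, hle]
  | add p q hp hq => rw [map_add, map_add, hp, hq, coeff_add, add_mul]

variable {n : ℕ}

theorem fischer_eq_sum_of_support_subset (F G : MvPolynomial (Fin n) ℂ)
    {s : Finset (Fin n →₀ ℕ)} (hs : F.support ⊆ s) :
    fischer F G = ∑ μ ∈ s, star (coeff μ F) * coeff μ G * ∏ i, ((μ i).factorial : ℂ) := by
  rw [fischer, applyDiff, eval_zero, map_sum,
    support_map_of_injective _ (starRingEnd ℂ).injective]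
  refine (Finset.sum_congr rfl fun μ _ => ?_).trans
    (Finset.sum_subset hs fun μ _ hμ => by simp [notMem_support_iff.mp hμ])
  simp [coeff_map, constantCoeff_diffOp, mul_assoc]

theorem fischer_add_left (F₁ F₂ G : MvPolynomial (Fin n) ℂ) :
    fischer (F₁ + F₂) G = fischer F₁ G + fischer F₂ G := by
  rw [fischer_eq_sum_of_support_subset _ _ support_add,
    fischer_eq_sum_of_support_subset F₁ G Finset.subset_union_left,
    fischer_eq_sum_of_support_subset F₂ G Finset.subset_union_right, ← Finset.sum_add_distrib]
  simp only [coeff_add, star_add, add_mul]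

theorem fischer_sum_left {α : Type*} (s : Finset α) (F : α → MvPolynomial (Fin n) ℂ)
    (G : MvPolynomial (Fin n) ℂ) : fischer (∑ a ∈ s, F a) G = ∑ a ∈ s, fischer (F a) G :=
  map_sum (AddMonoidHom.mk' (fischer · G) (fischer_add_left · · G)) F s

theorem fischer_monomial_left (μ : Fin n →₀ ℕ) (c : ℂ) (G : MvPolynomial (Fin n) ℂ) :
    fischer (monomial μ c) G = star c * coeff μ G * ∏ i, ((μ i).factorial : ℂ) := by
  rw [fischer_eq_sum_of_support_subset _ _ support_monomial_subset, Finset.sum_singleton,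
    coeff_monomial, if_pos rfl]

end Fischer

section Alternating

variable {ι R : Type*} [Fintype ι] [DecidableEq ι] [CommRing R]

def IsAlternating (F : MvPolynomial ι R) : Prop :=
  ∀ σ : Equiv.Perm ι, rename σ F = ((Equiv.Perm.sign σ : ℤ) : R) • F

theorem IsAlternating.coeff_comp_perm {F : MvPolynomial ι R} (hF : IsAlternating F)
    (σ : Equiv.Perm ι) (f : ι → ℕ) :
    coeff (Finsupp.equivFunOnFinite.symm (f ∘ σ)) F =
      (Equiv.Perm.sign σ : ℤ) * coeff (Finsupp.equivFunOnFinite.symm f) F := by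
  have h := coeff_rename_mapDomain σ σ.injective F (Finsupp.equivFunOnFinite.symm (f ∘ σ))
  have hmap : Finsupp.mapDomain σ (Finsupp.equivFunOnFinite.symm (f ∘ σ)) =
      Finsupp.equivFunOnFinite.symm f := by
    ext a
    simp [Finsupp.mapDomain_equiv_apply]
  rw [hmap, hF σ, coeff_smul, smul_eq_mul] at h
  exact h.symm

theorem IsAlternating.coeff_eq_zero_of_not_injective [NoZeroDivisors R] [CharZero R]
    {F : MvPolynomial ι R} (hF : IsAlternating F) {m : ι →₀ ℕ} (hm : ¬ Function.Injective m) :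
    coeff m F = 0 := by
  obtain ⟨i, j, hij, hne⟩ := Function.not_injective_iff.mp hm
  have hswap : ⇑m ∘ Equiv.swap i j = m := by
    ext k
    rcases eq_or_ne k i with rfl | hki
    · simp [hij]
    rcases eq_or_ne k j with rfl | hkj
    · simp [hij]
    · simp [Equiv.swap_apply_of_ne_of_ne hki hkj]
  have h := hF.coeff_comp_perm (Equiv.swap i j) m
  rw [hswap, Equiv.Perm.sign_swap hne, Finsupp.equivFunOnFinite_symm_coe] at h
  simpa [CharZero.eq_neg_self_iff] using h

end Alternating

section aDet

variable {n : ℕ}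

theorem aDet_eq_sum (ν : Fin n → ℕ) :
    aDet n ν = ∑ σ : Equiv.Perm (Fin n),
      monomial (Finsupp.equivFunOnFinite.symm (ν ∘ σ)) ((Equiv.Perm.sign σ : ℤ) : ℂ) := by
  rw [aDet, ← Matrix.det_transpose, Matrix.det_apply']
  refine Finset.sum_congr rfl fun σ _ => ?_
  have hprod : ∏ i, (X i : MvPolynomial (Fin n) ℂ) ^ ν (σ i) =
      monomial (Finsupp.equivFunOnFinite.symm (ν ∘ σ)) 1 := by
    rw [monomial_eq, C_1, one_mul, Finsupp.prod_fintype _ _ fun _ => pow_zero _]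
    rfl
  simp only [Matrix.transpose_apply, Matrix.of_apply, hprod]
  rw [← map_intCast (C : ℂ →+* MvPolynomial (Fin n) ℂ), C_mul_monomial, mul_one]

theorem aDet_isAlternating (ν : Fin n → ℕ) : IsAlternating (aDet n ν) := by
  intro σ
  have hrows : (rename σ : MvPolynomial (Fin n) ℂ →ₐ[ℂ] _).mapMatrix
      (Matrix.of fun i j => X i ^ ν j) = (Matrix.of fun i j => X i ^ ν j).submatrix σ id := by
    ext i j
    simp
  rw [aDet, AlgHom.map_det, hrows, Matrix.det_permute,
    ← map_intCast (C : ℂ →+* MvPolynomial (Fin n) ℂ), ← smul_eq_C_mul]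

theorem fischer_aDet (ν : Fin n → ℕ) (G : MvPolynomial (Fin n) ℂ) :
    fischer (aDet n ν) G = (∏ i, ((ν i).factorial : ℂ)) *
      ∑ σ : Equiv.Perm (Fin n),
        (Equiv.Perm.sign σ : ℤ) * coeff (Finsupp.equivFunOnFinite.symm (ν ∘ σ)) G := by
  rw [aDet_eq_sum, fischer_sum_left, Finset.mul_sum]
  refine Finset.sum_congr rfl fun σ _ => ?_
  rw [fischer_monomial_left, star_intCast]
  simp only [Finsupp.coe_equivFunOnFinite_symm, Function.comp_apply,
    Equiv.prod_comp σ fun i => ((ν i).factorial : ℂ)]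
  ring

theorem fischer_aDet_of_isAlternating (ν : Fin n → ℕ) {G : MvPolynomial (Fin n) ℂ}
    (hG : IsAlternating G) :
    fischer (aDet n ν) G = n.factorial * (∏ i, ((ν i).factorial : ℂ)) *
      coeff (Finsupp.equivFunOnFinite.symm ν) G := by
  have hsign (σ : Equiv.Perm (Fin n)) :
      (Equiv.Perm.sign σ : ℤ) * coeff (Finsupp.equivFunOnFinite.symm (ν ∘ σ)) G =
        coeff (Finsupp.equivFunOnFinite.symm ν) G := by
    rw [hG.coeff_comp_perm, ← mul_assoc, ← Int.cast_mul, ← Units.val_mul, Int.units_mul_self,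
      Units.val_one, Int.cast_one, one_mul]
  simp only [fischer_aDet, hsign, Finset.sum_const, Finset.card_univ, Fintype.card_perm,
    Fintype.card_fin, nsmul_eq_mul]
  ring

theorem coeff_aDet_of_strictAnti {ν ν' : Fin n → ℕ} (hν : StrictAnti ν) (hν' : StrictAnti ν') :
    coeff (Finsupp.equivFunOnFinite.symm ν) (aDet n ν') = if ν = ν' then 1 else 0 := by
  simp only [aDet_eq_sum, coeff_sum, coeff_monomial, EmbeddingLike.apply_eq_iff_eq]
  split_ifs with h
  · subst h
    rw [Finset.sum_eq_single 1 (fun τ _ hτ => if_neg fun h => hτ ?_) (by simp)]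
    · simp
    exact Equiv.ext fun i => hν.injective (congrFun h i)
  -- a strictly antitone rearrangement of `ν'` is `ν'` itself
  refine Finset.sum_eq_zero fun τ _ => if_neg fun hτ => h ?_
  have := Tuple.unique_antitone (f := ν') (σ := τ) (τ := 1) (hτ ▸ hν.antitone) hν'.antitone
  rw [← hτ, this]
  rfl

end aDet

section Partitions

variable {n : ℕ}

theorem strictAnti_shiftedExp {lam : Fin n → ℕ} (hlam : Antitone lam) :
    StrictAnti (shiftedExp n lam) := fun j k hjk => by
  have := hlam hjk.le
  have : (j : ℕ) < k := hjk
  have := k.isLt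
  simp only [shiftedExp]
  omega

theorem shiftedExp_injective : Function.Injective (shiftedExp n) := fun lam mu h =>
  funext fun j => by simpa [shiftedExp] using congrFun h j

theorem StrictAnti.add_sub_le {ν : Fin n → ℕ} (hν : StrictAnti ν) {j k : Fin n} (hjk : j ≤ k) :
    ν k + (k - j : ℕ) ≤ ν j := by
  -- `ν` maps `[j, k]` injectively into `[ν k, ν j]`
  have := Finset.card_le_card_of_injOn ν
    (s := Finset.Icc j k) (t := Finset.Icc (ν k) (ν j))
    (fun i hi => by
      obtain ⟨hji, hik⟩ := Finset.mem_Icc.mp hi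
      exact Finset.mem_Icc.mpr ⟨hν.antitone hik, hν.antitone hji⟩)
    hν.injective.injOn
  rw [Fin.card_Icc, Nat.card_Icc] at this
  have : (j : ℕ) ≤ k := hjk
  have := hν.antitone hjk
  omega

theorem StrictAnti.exists_antitone_shiftedExp_eq {ν : Fin n → ℕ} (hν : StrictAnti ν) :
    ∃ lam, Antitone lam ∧ shiftedExp n lam = ν := by
  have hlast (j : Fin n) : n - 1 - j ≤ ν j := by
    have := j.isLt
    have := hν.add_sub_le (j := j) (k := ⟨n - 1, by omega⟩) (Fin.le_def.mpr (by dsimp; omega))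
    dsimp at this
    omega
  refine ⟨fun j => ν j - (n - 1 - j), fun j k hjk => ?_, funext fun j => ?_⟩
  · have := hν.add_sub_le hjk
    have : (j : ℕ) ≤ k := hjk
    dsimp only
    have := hlast k
    omega
  · have := hlast j
    simp only [shiftedExp]
    omega

theorem Function.Injective.exists_strictAnti_comp_perm {α : Type*} [LinearOrder α]
    {f : Fin n → α} (hf : Function.Injective f) :
    ∃ π : Equiv.Perm (Fin n), StrictAnti (f ∘ π) :=
  ⟨Fin.revPerm.trans (Tuple.sort f),
    ((Tuple.monotone_sort f).strictMono_of_injective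
      (hf.comp (Tuple.sort f).injective)).comp_strictAnti Fin.rev_strictAnti⟩

end Partitions

/-- The family `a_{λ+δ}`, over partitions `λ`, spans a dense subspace of the alternating
part of the Segal–Bargmann space (any alternating polynomial orthogonal to all of them is
zero) and satisfies `⟨a_{λ+δ}, a_{μ+δ}⟩ = δ_{λμ} n! (λ+δ)!`. -/
theorem aDet_orthonormal_basis_alternating (n : ℕ) :
    (∀ F : MvPolynomial (Fin n) ℂ,
        (∀ σ : Equiv.Perm (Fin n), rename ⇑σ F = ((Equiv.Perm.sign σ : ℤ) : ℂ) • F) →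
        (∀ lam : Fin n → ℕ, Antitone lam → fischer (aDet n (shiftedExp n lam)) F = 0) →
        F = 0) ∧
    (∀ lam mu : Fin n → ℕ, Antitone lam → Antitone mu →
        fischer (aDet n (shiftedExp n lam)) (aDet n (shiftedExp n mu)) =
          if lam = mu then
            (n.factorial : ℂ) * ∏ i, ((shiftedExp n lam i).factorial : ℂ)
          else 0) := by
  refine ⟨fun F hF horth => ?_, fun lam mu hlam hmu => ?_⟩
  · ext m
    rw [coeff_zero]
    by_cases hm : Function.Injective m
    · obtain ⟨π, hπ⟩ := hm.exists_strictAnti_comp_perm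
      obtain ⟨lam, hlam, hν⟩ := hπ.exists_antitone_shiftedExp_eq
      have h0 := horth lam hlam
      rw [hν, fischer_aDet_of_isAlternating _ hF, IsAlternating.coeff_comp_perm hF,
        Finsupp.equivFunOnFinite_symm_coe] at h0
      simpa [Nat.factorial_ne_zero, Finset.prod_eq_zero_iff] using h0
    · exact IsAlternating.coeff_eq_zero_of_not_injective hF hm
  · rw [fischer_aDet_of_isAlternating _ (aDet_isAlternating _),
      coeff_aDet_of_strictAnti (strictAnti_shiftedExp hlam) (strictAnti_shiftedExp hmu)]
    simp only [shiftedExp_injective.eq_iff, mul_ite, mul_one, mul_zero]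
end

section
/- The map F ↦ Δ·F is a linear isomorphism from the space of symmetric polynomials in n variables onto the space of alternating polynomials in n variables. -/
/-!
Δ is the determinant of the Vandermonde matrix of the variables, so renaming the variables by `σ`
multiplies it by `sign σ`; as `Δ ≠ 0`, the product `Δ * F` is alternating exactly when `F` is
symmetric. Conversely, the substitution `X j ↦ X i` is unchanged by the transposition `(i j)`, so it
kills every alternating `G`, i.e. `X j - X i ∣ G`. These factors of `Δ` are pairwise non-associated
primes, so `Δ ∣ G`, and `G / Δ` is symmetric.
-/

open MvPolynomial

/-- The Vandermonde polynomial `Δ(z₁,…,zₙ) = ∏_{i<j} (z_j - z_i)`. -/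
noncomputable def vand (n : ℕ) : MvPolynomial (Fin n) ℂ :=
  ∏ i : Fin n, ∏ j ∈ Finset.Ioi i, (X j - X i)

noncomputable def symmP (n : ℕ) : Submodule ℂ (MvPolynomial (Fin n) ℂ) where
  carrier := {F | ∀ σ : Equiv.Perm (Fin n), rename ⇑σ F = F}
  add_mem' := by intro a b ha hb σ; rw [map_add, ha σ, hb σ]
  zero_mem' := by intro σ; simp
  smul_mem' := by intro c a ha σ; rw [map_smul, ha σ]

noncomputable def altP (n : ℕ) : Submodule ℂ (MvPolynomial (Fin n) ℂ) where
  carrier := {F | ∀ σ : Equiv.Perm (Fin n),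
    rename ⇑σ F = ((Equiv.Perm.sign σ : ℤ) : ℂ) • F}
  add_mem' := by intro a b ha hb σ; rw [map_add, ha σ, hb σ, smul_add]
  zero_mem' := by intro σ; simp
  smul_mem' := by intro c a ha σ; rw [map_smul, ha σ, smul_comm]

namespace MvPolynomial
variable {R σ : Type*} [CommRing R] [DecidableEq σ]

theorem X_sub_X_dvd_iff {i j : σ} {p : MvPolynomial σ R} :
    X j - X i ∣ p ↔ rename (Function.update id j i) p = 0 := by
  set I := Ideal.span {(X j - X i : MvPolynomial σ R)}
  have hmod : (Ideal.Quotient.mkₐ R I).comp (rename (Function.update id j i)) =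
      Ideal.Quotient.mkₐ R I := by
    refine algHom_ext fun k => ?_
    rcases eq_or_ne k j with rfl | hk
    · simpa [Ideal.Quotient.eq] using I.neg_mem (Ideal.subset_span rfl)
    · simp [hk]
  constructor
  · rintro ⟨q, rfl⟩
    simp [Function.update_apply]
  · intro h
    have := congr($hmod p)
    simp only [AlgHom.comp_apply, h, map_zero, Ideal.Quotient.mkₐ_eq_mk] at this
    rwa [← Ideal.mem_span_singleton, ← Ideal.Quotient.eq_zero_iff_mem, eq_comm]

theorem prime_X_sub_X [IsDomain R] {i j : σ} (hij : i ≠ j) :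
    Prime (X j - X i : MvPolynomial σ R) := by
  have hne : (X j - X i : MvPolynomial σ R) ≠ 0 := sub_ne_zero.mpr (X_injective.ne hij.symm)
  have hker : Ideal.span {X j - X i} = RingHom.ker (rename (R := R) (Function.update id j i)) :=
    Ideal.ext fun p => by rw [Ideal.mem_span_singleton, RingHom.mem_ker, X_sub_X_dvd_iff]
  rw [← Ideal.span_singleton_prime hne, hker]
  exact RingHom.ker_isPrime _

theorem X_sub_X_dvd_X_sub_X_iff [Nontrivial R] {i j k l : σ} (hkl : k ≠ l) :
    (X j - X i : MvPolynomial σ R) ∣ X l - X k ↔ k = i ∧ l = j ∨ k = j ∧ l = i := by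
  rw [X_sub_X_dvd_iff, map_sub, rename_X, rename_X, sub_eq_zero, X_inj]
  simp only [Function.update_apply, id]
  grind

theorem X_sub_X_dvd_of_rename_swap [NoZeroDivisors R] [CharZero R] {i j : σ}
    {p : MvPolynomial σ R} (hp : rename (Equiv.swap i j) p = -p) : X j - X i ∣ p := by
  have hcomp : Function.update id j i ∘ Equiv.swap i j = Function.update id j i := by
    ext k
    simp only [Function.comp_apply, Function.update_apply, id, Equiv.swap_apply_def]
    grind
  rw [X_sub_X_dvd_iff, ← add_self_eq_zero]
  nth_rw 1 [← hcomp, ← rename_rename, hp, map_neg, neg_add_cancel]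

theorem rename_det_vandermonde_X {n : ℕ} (τ : Equiv.Perm (Fin n)) :
    rename τ (Matrix.vandermonde (X : Fin n → MvPolynomial (Fin n) R)).det =
      (Equiv.Perm.sign τ : ℤ) •
        (Matrix.vandermonde (X : Fin n → MvPolynomial (Fin n) R)).det := by
  have hmap : (rename τ).mapMatrix (Matrix.vandermonde (X : Fin n → MvPolynomial (Fin n) R)) =
      (Matrix.vandermonde X).submatrix τ id := by
    ext i k
    simp [Matrix.vandermonde_apply]
  rw [AlgHom.map_det, hmap, Matrix.det_permute, zsmul_eq_mul]

theorem prod_X_sub_X_dvd_of_rename_swap [IsDomain R] [UniqueFactorizationMonoid R] [CharZero R]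
    {n : ℕ} {p : MvPolynomial (Fin n) R}
    (hp : ∀ i j : Fin n, i ≠ j → rename (Equiv.swap i j) p = -p) :
    ∏ i : Fin n, ∏ j ∈ Finset.Ioi i, (X j - X i) ∣ p := by
  rw [Finset.prod_sigma']
  refine Finset.prod_dvd_of_isRelPrime ?_ fun x hx => X_sub_X_dvd_of_rename_swap (hp _ _ ?_)
  · rintro ⟨i, j⟩ hij ⟨k, l⟩ hkl hne
    simp only [Finset.coe_sigma, Set.mem_sigma_iff, Finset.coe_Ioi, Set.mem_Ioi] at hij hkl
    rw [Function.onFun, (prime_X_sub_X hij.2.ne).irreducible.isRelPrime_iff_not_dvd,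
      X_sub_X_dvd_X_sub_X_iff hkl.2.ne]
    grind
  · simp only [Finset.mem_sigma, Finset.mem_Ioi] at hx
    exact hx.2.ne

end MvPolynomial

theorem vand_eq_det_vandermonde (n : ℕ) :
    vand n = (Matrix.vandermonde (X : Fin n → MvPolynomial (Fin n) ℂ)).det :=
  (Matrix.det_vandermonde X).symm

theorem vand_ne_zero (n : ℕ) : vand n ≠ 0 := by
  rw [vand_eq_det_vandermonde]
  exact Matrix.det_vandermonde_ne_zero_iff.mpr X_injective

theorem rename_vand (n : ℕ) (σ : Equiv.Perm (Fin n)) :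
    rename σ (vand n) = ((Equiv.Perm.sign σ : ℤ) : ℂ) • vand n := by
  rw [vand_eq_det_vandermonde, rename_det_vandermonde_X, Int.cast_smul_eq_zsmul]

theorem vand_mul_mem_altP_iff {n : ℕ} {F : MvPolynomial (Fin n) ℂ} :
    vand n * F ∈ altP n ↔ F ∈ symmP n := by
  refine forall_congr' fun σ => ?_
  have hsign : ((Equiv.Perm.sign σ : ℤ) : ℂ) • vand n ≠ 0 :=
    smul_ne_zero (by simp) (vand_ne_zero n)
  rw [map_mul, rename_vand, ← smul_mul_assoc]
  exact mul_right_inj' hsign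

theorem vand_dvd_of_mem_altP {n : ℕ} {G : MvPolynomial (Fin n) ℂ} (hG : G ∈ altP n) :
    vand n ∣ G :=
  prod_X_sub_X_dvd_of_rename_swap fun i j hij => by
    rw [hG (Equiv.swap i j), Equiv.Perm.sign_swap hij]
    simp

/-- Multiplication by the Vandermonde `Δ` is a linear isomorphism from symmetric
polynomials onto alternating polynomials. -/
theorem mul_vandermonde_linear_iso_symm_alt (n : ℕ) :
    ∃ e : symmP n ≃ₗ[ℂ] altP n,
      ∀ F : symmP n, (e F : MvPolynomial (Fin n) ℂ) = vand n * (F : MvPolynomial (Fin n) ℂ) := by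
  let L : symmP n →ₗ[ℂ] altP n :=
    (LinearMap.mulLeft ℂ (vand n)).restrict fun _ hF => vand_mul_mem_altP_iff.mpr hF
  have hinj : Function.Injective L := fun F F' h =>
    Subtype.ext (mul_left_cancel₀ (vand_ne_zero n) congr(($h : MvPolynomial (Fin n) ℂ)))
  have hsurj : Function.Surjective L := by
    rintro ⟨G, hG⟩
    obtain ⟨F, rfl⟩ := vand_dvd_of_mem_altP hG
    exact ⟨⟨F, vand_mul_mem_altP_iff.mp hG⟩, rfl⟩
  exact ⟨LinearEquiv.ofBijective L ⟨hinj, hsurj⟩, fun _ => rfl⟩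
end

section
/- The restriction map F ↦ F|_D from conjugation-invariant polynomials on n×n complex matrices to symmetric polynomials in n variables (evaluating at diagonal matrices) is a linear isomorphism (a special case of the Chevalley restriction theorem for GL_n). -/
open MvPolynomial

/-- The action of `g ∈ GL_n(ℂ)` on polynomials on `M_n(ℂ)`: substitute the entries of
`g⁻¹ z g` for the entries of `z`. -/
noncomputable def conjAct (n : ℕ) (g : Matrix.GeneralLinearGroup (Fin n) ℂ) :
    MvPolynomial (Fin n × Fin n) ℂ →ₐ[ℂ] MvPolynomial (Fin n × Fin n) ℂ :=
  aeval fun p : Fin n × Fin n =>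
    ∑ k : Fin n, ∑ l : Fin n,
      C ((↑(g⁻¹) : Matrix (Fin n) (Fin n) ℂ) p.1 k * (↑g : Matrix (Fin n) (Fin n) ℂ) l p.2) *
        X (k, l)

/-- The submodule of conjugation-invariant polynomials on `M_n(ℂ)`. -/
noncomputable def invP (n : ℕ) : Submodule ℂ (MvPolynomial (Fin n × Fin n) ℂ) where
  carrier := {F | ∀ g : Matrix.GeneralLinearGroup (Fin n) ℂ, conjAct n g F = F}
  add_mem' := by intro a b ha hb g; rw [map_add, ha g, hb g]
  zero_mem' := by intro g; simp
  smul_mem' := by intro c a ha g; rw [map_smul, ha g]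

/-- Restriction of a polynomial on `M_n(ℂ)` to the diagonal matrices:
`F|_D(x₁,…,xₙ) = F(diag(x₁,…,xₙ))`. -/
noncomputable def restr (n : ℕ) (F : MvPolynomial (Fin n × Fin n) ℂ) :
    MvPolynomial (Fin n) ℂ :=
  aeval (fun p : Fin n × Fin n =>
    if p.1 = p.2 then (X p.1 : MvPolynomial (Fin n) ℂ) else 0) F


namespace ChevAux

variable {n : ℕ}

/-- Evaluation of a polynomial on matrix entries at a matrix, as an algebra hom. -/
noncomputable def evalM (z : Matrix (Fin n) (Fin n) ℂ) :
    MvPolynomial (Fin n × Fin n) ℂ →ₐ[ℂ] ℂ :=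
  aeval fun p : Fin n × Fin n => z p.1 p.2

lemma aeval_eq_eval {α : Type*} (x : α → ℂ) (p : MvPolynomial α ℂ) :
    aeval x p = eval x p := by
  rw [aeval_def, Algebra.algebraMap_self]; rfl

lemma evalM_eq_eval (x : Fin n × Fin n → ℂ) (F : MvPolynomial (Fin n × Fin n) ℂ) :
    evalM (Matrix.of fun i j => x (i, j)) F = eval x F := by
  rw [evalM]
  have : (fun p : Fin n × Fin n => (Matrix.of fun i j => x (i, j)) p.1 p.2) = x := by
    funext p; cases p; rfl
  rw [this, aeval_eq_eval]

lemma evalM_conjAct (g : Matrix.GeneralLinearGroup (Fin n) ℂ)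
    (z : Matrix (Fin n) (Fin n) ℂ) (F : MvPolynomial (Fin n × Fin n) ℂ) :
    evalM z (conjAct n g F) =
      evalM ((↑(g⁻¹) : Matrix (Fin n) (Fin n) ℂ) * z * (↑g : Matrix (Fin n) (Fin n) ℂ)) F := by
  rw [show evalM z (conjAct n g F) = ((evalM z).comp (conjAct n g)) F from rfl,
    conjAct, comp_aeval]
  congr 1
  apply MvPolynomial.algHom_ext
  intro p
  simp only [evalM, aeval_X]
  simp only [map_sum, map_mul, aeval_C, aeval_X, Algebra.algebraMap_self, RingHom.id_apply,
    Matrix.mul_apply, Finset.sum_mul]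
  rw [Finset.sum_comm]
  apply Finset.sum_congr rfl
  intro l _
  apply Finset.sum_congr rfl
  intro k _
  ring

lemma evalM_restr (x : Fin n → ℂ) (F : MvPolynomial (Fin n × Fin n) ℂ) :
    eval x (restr n F) = evalM (Matrix.diagonal x) F := by
  rw [restr, ← aeval_eq_eval,
    show aeval x (aeval (fun p : Fin n × Fin n =>
      if p.1 = p.2 then (X p.1 : MvPolynomial (Fin n) ℂ) else 0) F)
      = ((aeval x).comp (aeval (fun p : Fin n × Fin n =>
        if p.1 = p.2 then (X p.1 : MvPolynomial (Fin n) ℂ) else 0))) F from rfl,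
    comp_aeval]
  congr 1
  apply MvPolynomial.algHom_ext
  intro p
  simp only [evalM, aeval_X]
  by_cases h : p.1 = p.2 <;> simp [h, Matrix.diagonal_apply]

/-- The generic `n × n` matrix whose entries are the variables. -/
noncomputable def gen (n : ℕ) : Matrix (Fin n) (Fin n) (MvPolynomial (Fin n × Fin n) ℂ) :=
  Matrix.of fun i j => X (i, j)

/-- Conjugation-invariant polynomial whose restriction to diagonal matrices is `esymm k`. -/
noncomputable def Ek (n k : ℕ) : MvPolynomial (Fin n × Fin n) ℂ :=
  (-1 : MvPolynomial (Fin n × Fin n) ℂ) ^ k * ((gen n).charpoly.coeff (n - k))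

lemma evalM_Ek (z : Matrix (Fin n) (Fin n) ℂ) (k : ℕ) :
    evalM z (Ek n k) = (-1 : ℂ) ^ k * (z.charpoly.coeff (n - k)) := by
  rw [Ek, map_mul, map_pow, map_neg, map_one]
  congr 1
  have h1 : (gen n).map (evalM (n := n) z : MvPolynomial (Fin n × Fin n) ℂ →+* ℂ) = z := by
    ext i j
    simp [gen, evalM, Matrix.map_apply]
  calc evalM z ((gen n).charpoly.coeff (n - k))
      = ((gen n).charpoly.map (evalM (n := n) z : MvPolynomial (Fin n × Fin n) ℂ →+* ℂ)).coeff
          (n - k) := (Polynomial.coeff_map _ _).symm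
    _ = z.charpoly.coeff (n - k) := by rw [← Matrix.charpoly_map, h1]

lemma charpoly_natDegree (z : Matrix (Fin n) (Fin n) ℂ) : z.charpoly.natDegree = n := by
  rw [Matrix.charpoly_natDegree_eq_dim, Fintype.card_fin]

lemma card_roots (z : Matrix (Fin n) (Fin n) ℂ) :
    Multiset.card z.charpoly.roots = n := by
  have h := Polynomial.splits_iff_card_roots.mp
    (IsAlgClosed.splits (k := ℂ) z.charpoly)
  rwa [charpoly_natDegree z] at h

lemma evalM_Ek_esymm (z : Matrix (Fin n) (Fin n) ℂ) (k : ℕ) (hk : k ≤ n) :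
    evalM z (Ek n k) = z.charpoly.roots.esymm k := by
  have hdeg := charpoly_natDegree z
  have hroots : Multiset.card z.charpoly.roots = z.charpoly.natDegree := by
    rw [hdeg]; exact card_roots z
  have hkk : n - k ≤ z.charpoly.natDegree := by rw [hdeg]; omega
  rw [evalM_Ek, Polynomial.coeff_eq_esymm_roots_of_card hroots hkk,
    (Matrix.charpoly_monic z).leadingCoeff, hdeg]
  have h2 : n - (n - k) = k := by omega
  rw [h2, one_mul, ← mul_assoc, ← pow_add, Even.neg_one_pow ⟨k, rfl⟩, one_mul]

/-- Master evaluation lemma: evaluating `aeval Ek p` at a matrix agrees with evaluating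
`aeval esymm p` at any enumeration of the eigenvalues. -/
lemma evalM_aeval_Ek (p : MvPolynomial (Fin n) ℂ) (z : Matrix (Fin n) (Fin n) ℂ)
    (lam : Fin n → ℂ) (h : Multiset.map lam Finset.univ.val = z.charpoly.roots) :
    evalM z (aeval (fun i : Fin n => Ek n (i + 1)) p) =
      eval lam (aeval (fun i : Fin n => esymm (Fin n) ℂ (i + 1)) p) := by
  rw [comp_aeval_apply (f := fun i : Fin n => Ek n (i + 1)) (evalM z) p,
    ← aeval_eq_eval lam,
    comp_aeval_apply (f := fun i : Fin n => esymm (Fin n) ℂ (i + 1)) (aeval lam) p]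
  have hfun : (fun i : Fin n => evalM z (Ek n (i + 1))) =
      (fun i : Fin n => aeval lam (esymm (Fin n) ℂ (i + 1))) := by
    funext i
    rw [evalM_Ek_esymm z _ i.isLt, aeval_esymm_eq_multiset_esymm, h]
  rw [hfun]

lemma roots_charpoly_diagonal (x : Fin n → ℂ) :
    (Matrix.diagonal x).charpoly.roots = Multiset.map x Finset.univ.val := by
  rw [Matrix.charpoly_of_upperTriangular _ (Matrix.blockTriangular_diagonal x)]
  simp only [Matrix.diagonal_apply_eq]
  have : (∏ i : Fin n, (Polynomial.X - Polynomial.C (x i))) =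
      ((Multiset.map x Finset.univ.val).map
        (fun a => Polynomial.X - Polynomial.C a)).prod := by
    rw [Multiset.map_map]
    rfl
  rw [this, Polynomial.roots_multiset_prod_X_sub_C]

lemma restr_aeval_Ek (p : MvPolynomial (Fin n) ℂ) :
    restr n (aeval (fun i : Fin n => Ek n (i + 1)) p) =
      aeval (fun i : Fin n => esymm (Fin n) ℂ (i + 1)) p := by
  apply MvPolynomial.funext
  intro x
  rw [evalM_restr, evalM_aeval_Ek p _ x (roots_charpoly_diagonal x).symm]

lemma charpoly_conj (g : Matrix.GeneralLinearGroup (Fin n) ℂ) (z : Matrix (Fin n) (Fin n) ℂ) :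
    ((↑(g⁻¹) : Matrix (Fin n) (Fin n) ℂ) * z * (↑g : Matrix (Fin n) (Fin n) ℂ)).charpoly
      = z.charpoly := by
  set A : Matrix (Fin n) (Fin n) ℂ := (↑(g⁻¹) : Matrix (Fin n) (Fin n) ℂ) with hA
  set B : Matrix (Fin n) (Fin n) ℂ := (↑g : Matrix (Fin n) (Fin n) ℂ) with hB
  have hAB : A * B = 1 := Units.inv_mul g
  have hφ1 : A.map Polynomial.C * B.map Polynomial.C = 1 := by
    rw [← Matrix.map_mul, hAB]
    exact Matrix.map_one _ (map_zero _) (map_one _)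
  have hc : Matrix.charmatrix (A * z * B) =
      A.map Polynomial.C * Matrix.charmatrix z * B.map Polynomial.C := by
    rw [Matrix.charmatrix, Matrix.charmatrix, mul_sub, sub_mul]
    congr 1
    · calc (Matrix.scalar (Fin n)) Polynomial.X
          = (Matrix.scalar (Fin n)) Polynomial.X * (A.map Polynomial.C * B.map Polynomial.C) := by
            rw [hφ1, mul_one]
        _ = A.map Polynomial.C * (Matrix.scalar (Fin n)) Polynomial.X * B.map Polynomial.C := by
            rw [← mul_assoc,
              (Matrix.scalar_commute Polynomial.X (fun r => Commute.all _ _)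
                (A.map Polynomial.C)).eq]
    · show (Polynomial.C : ℂ →+* Polynomial ℂ).mapMatrix (A * z * B) = _
      rw [map_mul, map_mul]
      rfl
  unfold Matrix.charpoly
  rw [hc, Matrix.det_mul, Matrix.det_mul]
  have hdet : (A.map Polynomial.C).det * (B.map Polynomial.C).det = 1 := by
    rw [← Matrix.det_mul, hφ1, Matrix.det_one]
  calc (A.map Polynomial.C).det * (Matrix.charmatrix z).det * (B.map Polynomial.C).det
      = (A.map Polynomial.C).det * (B.map Polynomial.C).det * (Matrix.charmatrix z).det := by
        ring
    _ = (Matrix.charmatrix z).det := by rw [hdet, one_mul]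

lemma conjAct_aeval_Ek (g : Matrix.GeneralLinearGroup (Fin n) ℂ) (p : MvPolynomial (Fin n) ℂ) :
    conjAct n g (aeval (fun i : Fin n => Ek n (i + 1)) p) =
      aeval (fun i : Fin n => Ek n (i + 1)) p := by
  apply MvPolynomial.funext
  intro x
  rw [← evalM_eq_eval x, ← evalM_eq_eval x, evalM_conjAct,
    comp_aeval_apply (f := fun i : Fin n => Ek n (i + 1)) (evalM _) p,
    comp_aeval_apply (f := fun i : Fin n => Ek n (i + 1)) (evalM _) p]
  have hfun : (fun i : Fin n =>
      evalM ((↑(g⁻¹) : Matrix (Fin n) (Fin n) ℂ) * (Matrix.of fun i j => x (i, j))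
        * (↑g : Matrix (Fin n) (Fin n) ℂ)) (Ek n (i + 1))) =
      (fun i : Fin n => evalM (Matrix.of fun i j => x (i, j)) (Ek n (i + 1))) := by
    funext i
    rw [evalM_Ek, evalM_Ek, charpoly_conj g]
  rw [hfun]

/-- Restriction of an invariant polynomial is symmetric. -/
lemma restr_mem_symm {F : MvPolynomial (Fin n × Fin n) ℂ} (hF : F ∈ invP n)
    (σ : Equiv.Perm (Fin n)) : rename ⇑σ (restr n F) = restr n F := by
  apply MvPolynomial.funext
  intro x
  rw [eval_rename, show (x ∘ ⇑σ) = fun i => x (σ i) from rfl, evalM_restr, evalM_restr]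
  -- build the permutation matrix for σ.symm as a unit
  have hmul : ∀ (τ η : Equiv.Perm (Fin n)),
      (τ.toPEquiv.toMatrix : Matrix (Fin n) (Fin n) ℂ) * η.toPEquiv.toMatrix
        = ((τ.trans η).toPEquiv.toMatrix : Matrix (Fin n) (Fin n) ℂ) := by
    intro τ η
    rw [← PEquiv.toMatrix_trans, ← Equiv.toPEquiv_trans]
  have h1 : (σ.symm.toPEquiv.toMatrix : Matrix (Fin n) (Fin n) ℂ)
      * σ.toPEquiv.toMatrix = 1 := by
    rw [hmul, Equiv.symm_trans_self, Equiv.toPEquiv_refl, PEquiv.toMatrix_refl]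
  have h2 : (σ.toPEquiv.toMatrix : Matrix (Fin n) (Fin n) ℂ)
      * σ.symm.toPEquiv.toMatrix = 1 := by
    rw [hmul, Equiv.self_trans_symm, Equiv.toPEquiv_refl, PEquiv.toMatrix_refl]
  let g : Matrix.GeneralLinearGroup (Fin n) ℂ :=
    ⟨σ.symm.toPEquiv.toMatrix, σ.toPEquiv.toMatrix, h1, h2⟩
  have hginv : (↑(g⁻¹) : Matrix (Fin n) (Fin n) ℂ) = σ.toPEquiv.toMatrix := rfl
  have hconj : (↑(g⁻¹) : Matrix (Fin n) (Fin n) ℂ) * Matrix.diagonal x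
      * (↑g : Matrix (Fin n) (Fin n) ℂ) = Matrix.diagonal (fun i => x (σ i)) := by
    rw [hginv, show (↑g : Matrix (Fin n) (Fin n) ℂ) = σ.symm.toPEquiv.toMatrix from rfl,
      PEquiv.toMatrix_toPEquiv_mul, PEquiv.mul_toMatrix_toPEquiv]
    ext i j
    by_cases h : i = j
    · subst h; simp [Matrix.submatrix_apply, Matrix.diagonal_apply]
    · simp [Matrix.submatrix_apply, Matrix.diagonal_apply, h,
        fun hh => h (σ.injective hh)]
  have hFε := hF g
  calc evalM (Matrix.diagonal fun i => x (σ i)) F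
      = evalM ((↑(g⁻¹) : Matrix (Fin n) (Fin n) ℂ) * Matrix.diagonal x
          * (↑g : Matrix (Fin n) (Fin n) ℂ)) F := by rw [hconj]
    _ = evalM (Matrix.diagonal x) (conjAct n g F) := (evalM_conjAct g _ F).symm
    _ = evalM (Matrix.diagonal x) F := by rw [hFε]

lemma exists_enum (z : Matrix (Fin n) (Fin n) ℂ) :
    ∃ lam : Fin n → ℂ, Multiset.map lam Finset.univ.val = z.charpoly.roots := by
  have hcard : Multiset.card z.charpoly.roots = n := card_roots z
  set l := z.charpoly.roots.toList with hl
  have hlen : l.length = n := by rw [hl, Multiset.length_toList, hcard]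
  refine ⟨fun i => l.get (Fin.cast hlen.symm i), ?_⟩
  rw [Fin.univ_val_map, ← Multiset.coe_toList z.charpoly.roots, ← hl]
  congr 1
  apply List.ext_getElem
  · simp [hlen]
  · intro i h1 h2
    simp [List.getElem_ofFn]

/-- A matrix with `n` distinct eigenvalues is diagonalizable. -/
lemma exists_conj_diag (z : Matrix (Fin n) (Fin n) ℂ) (lam : Fin n → ℂ)
    (h : Multiset.map lam Finset.univ.val = z.charpoly.roots)
    (hinj : Function.Injective lam) :
    ∃ g : Matrix.GeneralLinearGroup (Fin n) ℂ,
      (↑(g⁻¹) : Matrix (Fin n) (Fin n) ℂ) * z * (↑g : Matrix (Fin n) (Fin n) ℂ)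
        = Matrix.diagonal lam := by
  have hne : z.charpoly ≠ 0 := (Matrix.charpoly_monic z).ne_zero
  -- every `lam i` is a root of the characteristic polynomial
  have hroot : ∀ i : Fin n, (lam i • (1 : Matrix (Fin n) (Fin n) ℂ) - z).det = 0 := by
    intro i
    have hmem : lam i ∈ z.charpoly.roots := by
      rw [← h]
      exact Multiset.mem_map.mpr ⟨i, Finset.mem_val.mpr (Finset.mem_univ i), rfl⟩
    have hr : Polynomial.eval (lam i) z.charpoly = 0 :=
      Polynomial.isRoot_of_mem_roots hmem
    have hmap : (Matrix.charmatrix z).map (Polynomial.evalRingHom (lam i))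
        = lam i • (1 : Matrix (Fin n) (Fin n) ℂ) - z := by
      ext a b
      by_cases hab : a = b
      · subst hab
        simp [Matrix.charmatrix_apply_eq, Matrix.one_apply]
      · simp [Matrix.charmatrix_apply_ne _ _ _ hab, Matrix.one_apply_ne hab]
    rw [← hmap,
      show z.charmatrix.map ⇑(Polynomial.evalRingHom (lam i))
        = (Polynomial.evalRingHom (lam i)).mapMatrix z.charmatrix from rfl,
      ← RingHom.map_det]
    exact hr
  -- choose eigenvectors
  have hvec : ∀ i : Fin n, ∃ v : Fin n → ℂ, v ≠ 0 ∧ z.mulVec v = lam i • v := by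
    intro i
    obtain ⟨v, hv0, hv⟩ := (Matrix.exists_mulVec_eq_zero_iff.mpr (hroot i))
    refine ⟨v, hv0, ?_⟩
    rw [Matrix.sub_mulVec, sub_eq_zero, Matrix.smul_mulVec, Matrix.one_mulVec] at hv
    exact hv.symm
  choose v hv0 hv using hvec
  -- linear independence of eigenvectors
  have hli : LinearIndependent ℂ v := by
    apply Module.End.eigenvectors_linearIndependent' (Matrix.mulVecLin z) lam hinj v
    intro i
    constructor
    · rw [Module.End.mem_eigenspace_iff, Matrix.mulVecLin_apply]
      exact hv i
    · exact hv0 i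
  -- the matrix of eigenvectors is invertible
  set M : Matrix (Fin n) (Fin n) ℂ := (Matrix.of fun i j => v i j).transpose with hM
  have hunit : IsUnit M := by
    rw [hM, ← Matrix.isUnit_transpose, Matrix.transpose_transpose]
    exact Matrix.linearIndependent_rows_iff_isUnit.mp hli
  have hdet : IsUnit M.det := (Matrix.isUnit_iff_isUnit_det M).mp hunit
  refine ⟨⟨M, M⁻¹, Matrix.mul_nonsing_inv M hdet, Matrix.nonsing_inv_mul M hdet⟩, ?_⟩
  have hzg : z * M = M * Matrix.diagonal lam := by
    ext i j
    have hL : (z * M) i j = (z.mulVec (v j)) i := by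
      rw [Matrix.mul_apply, Matrix.mulVec]
      rfl
    rw [hL, hv j, Matrix.mul_diagonal]
    simp [hM, Pi.smul_apply, smul_eq_mul, mul_comm]
  show M⁻¹ * z * M = Matrix.diagonal lam
  calc M⁻¹ * z * M = M⁻¹ * (z * M) := by rw [mul_assoc]
    _ = M⁻¹ * (M * Matrix.diagonal lam) := by rw [hzg]
    _ = (M⁻¹ * M) * Matrix.diagonal lam := by rw [mul_assoc]
    _ = Matrix.diagonal lam := by rw [Matrix.nonsing_inv_mul M hdet, one_mul]

/-- The product of all differences of distinct variables (a discriminant up to sign). -/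
noncomputable def delta (n : ℕ) : MvPolynomial (Fin n) ℂ :=
  ∏ p ∈ Finset.univ.offDiag, (X p.1 - X p.2)

lemma delta_symm (σ : Equiv.Perm (Fin n)) : rename ⇑σ (delta n) = delta n := by
  rw [delta, map_prod]
  simp only [map_sub, rename_X]
  apply Finset.prod_nbij' (i := fun p : Fin n × Fin n => (σ p.1, σ p.2))
    (j := fun p : Fin n × Fin n => (σ.symm p.1, σ.symm p.2))
  · intro a ha
    simp only [Finset.mem_offDiag] at ha ⊢
    exact ⟨Finset.mem_univ _, Finset.mem_univ _, fun hc => ha.2.2 (σ.injective hc)⟩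
  · intro a ha
    simp only [Finset.mem_offDiag] at ha ⊢
    exact ⟨Finset.mem_univ _, Finset.mem_univ _, fun hc => ha.2.2 (σ.symm.injective hc)⟩
  · intro a _; simp
  · intro a _; simp
  · intro a _; rfl

lemma eval_delta (x : Fin n → ℂ) :
    eval x (delta n) = ∏ p ∈ Finset.univ.offDiag, (x p.1 - x p.2) := by
  rw [delta, map_prod]
  simp

lemma eval_delta_ne_zero {x : Fin n → ℂ} (hx : Function.Injective x) :
    eval x (delta n) ≠ 0 := by
  rw [eval_delta]
  apply Finset.prod_ne_zero_iff.mpr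
  intro p hp
  rw [Finset.mem_offDiag] at hp
  exact sub_ne_zero_of_ne (fun hc => hp.2.2 (hx hc))

lemma eval_delta_eq_zero {x : Fin n → ℂ} (hx : ¬ Function.Injective x) :
    eval x (delta n) = 0 := by
  rw [eval_delta]
  rw [Function.not_injective_iff] at hx
  obtain ⟨a, b, hab, hne⟩ := hx
  exact Finset.prod_eq_zero (i := (a, b))
    (Finset.mem_offDiag.mpr ⟨Finset.mem_univ _, Finset.mem_univ _, hne⟩)
    (sub_eq_zero_of_eq hab)

end ChevAux


open ChevAux

/-- Chevalley restriction for `GL_n`: the restriction map `F ↦ F|_D` is a linear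
isomorphism from conjugation-invariant polynomials on `M_n(ℂ)` onto symmetric
polynomials in `n` variables. -/
theorem chevalley_restriction (n : ℕ) :
    ∃ e : invP n ≃ₗ[ℂ] symmP n,
      ∀ F : invP n, (e F : MvPolynomial (Fin n) ℂ) = restr n (F : MvPolynomial (Fin n × Fin n) ℂ) := by
  classical
  -- the linear map
  let L : invP n →ₗ[ℂ] symmP n :=
    { toFun := fun F => ⟨restr n F.1, fun σ => restr_mem_symm F.2 σ⟩
      map_add' := by
        intro a b
        apply Subtype.ext
        exact map_add (aeval _) _ _
      map_smul' := by
        intro c a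
        apply Subtype.ext
        exact map_smul (aeval (R := ℂ) _) _ _ }
  -- the discriminant-like invariant polynomial
  have hsymΔ : delta n ∈ symmetricSubalgebra (Fin n) ℂ := fun σ => delta_symm σ
  obtain ⟨pD, hpD⟩ := esymmAlgHom_surjective (σ := Fin n) (R := ℂ) (n := n)
    (Fintype.card_fin n).le ⟨delta n, hsymΔ⟩
  have hval : aeval (fun i : Fin n => esymm (Fin n) ℂ (i + 1)) pD = delta n := by
    rw [← esymmAlgHom_apply, hpD]
  set D : MvPolynomial (Fin n × Fin n) ℂ := aeval (fun i : Fin n => Ek n (i + 1)) pD with hD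
  have hD0 : D ≠ 0 := by
    intro h0
    set x0 : Fin n → ℂ := fun i => ((i : ℕ) : ℂ) with hx0
    have hx0inj : Function.Injective x0 := by
      intro i j hij
      exact Fin.val_injective (Nat.cast_injective hij)
    have hev : evalM (Matrix.diagonal x0) D = eval x0 (delta n) := by
      rw [hD, evalM_aeval_Ek pD _ x0 (roots_charpoly_diagonal x0).symm, hval]
    rw [h0, map_zero] at hev
    exact eval_delta_ne_zero hx0inj hev.symm
  -- injectivity
  have hinj : Function.Injective L := by
    rw [injective_iff_map_eq_zero]
    intro F hF0
    have hres : restr n F.1 = 0 := congrArg Subtype.val hF0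
    apply Subtype.ext
    show F.1 = 0
    have hFD : F.1 * D = 0 := by
      apply MvPolynomial.funext
      intro x
      rw [map_zero, map_mul, ← evalM_eq_eval x F.1, ← evalM_eq_eval x D]
      set z : Matrix (Fin n) (Fin n) ℂ := Matrix.of fun i j => x (i, j) with hz
      obtain ⟨lam, hlam⟩ := exists_enum z
      by_cases hli : Function.Injective lam
      · apply mul_eq_zero_of_left
        obtain ⟨g, hg⟩ := exists_conj_diag z lam hlam hli
        have h1 : evalM z F.1 = evalM (Matrix.diagonal lam) F.1 := by
          rw [← hg, ← evalM_conjAct, F.2 g]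
        rw [h1, ← evalM_restr, hres, map_zero]
      · apply mul_eq_zero_of_right
        rw [hD, evalM_aeval_Ek pD z lam hlam, hval]
        exact eval_delta_eq_zero hli
    rcases mul_eq_zero.mp hFD with h | h
    · exact h
    · exact absurd h hD0
  -- surjectivity
  have hsurj : Function.Surjective L := by
    intro f
    obtain ⟨q, hq⟩ := esymmAlgHom_surjective (σ := Fin n) (R := ℂ) (n := n)
      (Fintype.card_fin n).le ⟨f.1, f.2⟩
    refine ⟨⟨aeval (fun i : Fin n => Ek n (i + 1)) q, fun g => conjAct_aeval_Ek g q⟩, ?_⟩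
    apply Subtype.ext
    show restr n (aeval (fun i : Fin n => Ek n (i + 1)) q) = f.1
    rw [restr_aeval_Ek, ← esymmAlgHom_apply, hq]
  exact ⟨LinearEquiv.ofBijective L ⟨hinj, hsurj⟩, fun F => rfl⟩
end

section
/- Coherent states are joint eigenfunctions of invariant differentiation: if F is a conjugation-invariant polynomial on M_n(ℂ) and Q_a(z) = ∫_{U(n)} e^{Tr(u⁻¹ z u a*)} du, then F(∂/∂z) Q_a = F(conj(a)) Q_a for every a ∈ M_n(ℂ). -/
/-!
Write `Tr(u⁻¹ z u a*) = Tr(z B_u)` with `B_u = u a* u⁻¹`. The derivative `∂/∂z_{ij}` acts on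
`e^{Tr(z B_u)}` as multiplication by `(B_u)_{ji}`, and may be taken under the integral since `U(n)`
is compact. Hence `F(∂/∂z) Q_a(z) = ∫ F(B_uᵀ) e^{Tr(z B_u)} du`, and `B_uᵀ = (uᵀ)⁻¹ conj(a) uᵀ`,
so `F(B_uᵀ) = F(conj a)` by the conjugation invariance of `F`.
-/

open MvPolynomial MeasureTheory

attribute [local instance] Matrix.normedAddCommGroup Matrix.normedSpace

noncomputable instance unitaryGroupMeasurableSpace (n : ℕ) :
    MeasurableSpace (Matrix.unitaryGroup (Fin n) ℂ) := borel _

/-- The partial derivative `∂/∂z_{ij}` of a function on `M_n(ℂ)`. -/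
noncomputable def pdM {n : ℕ} (p : Fin n × Fin n)
    (f : Matrix (Fin n) (Fin n) ℂ → ℂ) : Matrix (Fin n) (Fin n) ℂ → ℂ :=
  fun z => fderiv ℂ f z (Matrix.single p.1 p.2 1)

/-- The differential operator `∂^μ = ∏_{ij} (∂/∂z_{ij})^(μ ij)` on functions on `M_n(ℂ)`. -/
noncomputable def diffOpM {n : ℕ} (μ : (Fin n × Fin n) →₀ ℕ) :
    (Matrix (Fin n) (Fin n) ℂ → ℂ) → (Matrix (Fin n) (Fin n) ℂ → ℂ) :=
  (Finset.univ.toList : List (Fin n × Fin n)).foldr (fun p acc => (pdM p)^[μ p] ∘ acc) id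

/-- `F(∂/∂z)` applied to a function on `M_n(ℂ)`, for a polynomial `F = Σ c_μ z^μ`. -/
noncomputable def applyDiffM {n : ℕ} (F : MvPolynomial (Fin n × Fin n) ℂ)
    (f : Matrix (Fin n) (Fin n) ℂ → ℂ) (z : Matrix (Fin n) (Fin n) ℂ) : ℂ :=
  (AddMonoidAlgebra.coeff F).sum fun μ c => c * diffOpM μ f z

/-- Evaluation of a polynomial on `M_n(ℂ)` at a matrix. -/
noncomputable def evalMat {n : ℕ} (F : MvPolynomial (Fin n × Fin n) ℂ)
    (m : Matrix (Fin n) (Fin n) ℂ) : ℂ :=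
  eval (fun p : Fin n × Fin n => m p.1 p.2) F

open scoped Matrix

theorem Continuous.integrable_of_compactSpace {X F : Type*} [TopologicalSpace X]
    [CompactSpace X] [MeasurableSpace X] [OpensMeasurableSpace X] (μ : Measure X)
    [IsFiniteMeasure μ] [NormedAddCommGroup F] {f : X → F} (hf : Continuous f) :
    Integrable f μ :=
  hf.integrable_of_hasCompactSupport (.of_compactSpace f)

noncomputable def laplaceIntegral {X E : Type*} [MeasurableSpace X] [NormedAddCommGroup E]
    [NormedSpace ℂ E] (μ : Measure X) (L : X → E →L[ℂ] ℂ) (c : X → ℂ) (z : E) : ℂ :=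
  ∫ x, c x * Complex.exp (L x z) ∂μ

section LaplaceIntegral

variable {X E : Type*} [TopologicalSpace X] [CompactSpace X] [MeasurableSpace X]
  [OpensMeasurableSpace X] [NormedAddCommGroup E] [NormedSpace ℂ E]
  (μ : Measure X) [IsFiniteMeasure μ] {L : X → E →L[ℂ] ℂ}

theorem hasFDerivAt_laplaceIntegral (hL : Continuous L) {c : X → ℂ} (hc : Continuous c)
    (z₀ : E) :
    HasFDerivAt (laplaceIntegral μ L c)
      (∫ x, (c x * Complex.exp (L x z₀)) • L x ∂μ) z₀ := by
  have hint (z : E) : Continuous fun x => c x * Complex.exp (L x z) :=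
    hc.mul (Complex.continuous_exp.comp (hL.clm_apply continuous_const))
  obtain ⟨C, hC⟩ := isCompact_univ.exists_bound_of_continuousOn hc.continuousOn
  obtain ⟨K, hK⟩ := isCompact_univ.exists_bound_of_continuousOn hL.continuousOn
  refine hasFDerivAt_integral_of_dominated_of_fderiv_le (Metric.ball_mem_nhds z₀ one_pos)
    (F' := fun z x => (c x * Complex.exp (L x z)) • L x)
    (bound := fun _ => C * Real.exp (K * (‖z₀‖ + 1)) * K)
    (.of_forall fun z => (hint z).aestronglyMeasurable)
    ((hint z₀).integrable_of_compactSpace μ)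
    (((hint z₀).smul hL).aestronglyMeasurable_of_compactSpace) (.of_forall fun x z hz => ?_)
    (integrable_const _) (.of_forall fun x z _ => ?_)
  · have hCx := hC x trivial
    have hKx := hK x trivial
    have hK0 : 0 ≤ K := (norm_nonneg _).trans hKx
    have hre : (L x z).re ≤ K * (‖z₀‖ + 1) := calc
      (L x z).re ≤ ‖L x‖ * ‖z‖ := (Complex.re_le_norm _).trans ((L x).le_opNorm z)
      _ ≤ K * (‖z₀‖ + 1) := by
        gcongr
        linarith [norm_le_norm_add_norm_sub' z z₀, mem_ball_iff_norm.mp hz]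
    have hC0 : 0 ≤ C := (norm_nonneg _).trans hCx
    rw [norm_smul, norm_mul, Complex.norm_exp]
    gcongr
  · simpa only [smul_smul] using ((L x).hasFDerivAt.cexp).const_mul (c x)

theorem fderiv_laplaceIntegral_apply (hL : Continuous L) {c : X → ℂ} (hc : Continuous c)
    (v : E) :
    (fun z => fderiv ℂ (laplaceIntegral μ L c) z v) =
      laplaceIntegral μ L (fun x => c x * L x v) := by
  funext z
  have hint : Integrable (fun x => (c x * Complex.exp (L x z)) • L x) μ :=
    ((hc.mul (Complex.continuous_exp.comp (hL.clm_apply continuous_const))).smul hL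
      ).integrable_of_compactSpace μ
  rw [(hasFDerivAt_laplaceIntegral μ hL hc z).fderiv, ContinuousLinearMap.integral_apply hint]
  simp only [laplaceIntegral, FunLike.coe_smul, Pi.smul_apply, smul_eq_mul]
  congr 1 with x
  ring

end LaplaceIntegral

section MatrixLaplaceIntegral

-- Mathlib's product topology on matrices equals the topology of the sup norm used by `pdM`, but
-- not reducibly; with this instance, continuous linear forms on matrices have the type that
-- `fderiv` produces.
noncomputable abbrev matrixNormTopology (n : ℕ) : TopologicalSpace (Matrix (Fin n) (Fin n) ℂ) :=
  (inferInstance : PseudoMetricSpace _).toUniformSpace.toTopologicalSpace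

attribute [local instance] matrixNormTopology

variable {X : Type*} [TopologicalSpace X] [CompactSpace X] [MeasurableSpace X]
  [OpensMeasurableSpace X] (μ : Measure X) [IsFiniteMeasure μ] {n : ℕ}
  {L : X → Matrix (Fin n) (Fin n) ℂ →L[ℂ] ℂ}

theorem pdM_laplaceIntegral (hL : Continuous L) (p : Fin n × Fin n) {c : X → ℂ}
    (hc : Continuous c) :
    pdM p (laplaceIntegral μ L c) =
      laplaceIntegral μ L (fun x => c x * L x (Matrix.single p.1 p.2 1)) :=
  fderiv_laplaceIntegral_apply μ hL hc _

theorem iterate_pdM_laplaceIntegral (hL : Continuous L) (p : Fin n × Fin n) (k : ℕ)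
    {c : X → ℂ} (hc : Continuous c) :
    (pdM p)^[k] (laplaceIntegral μ L c) =
      laplaceIntegral μ L (fun x => c x * L x (Matrix.single p.1 p.2 1) ^ k) := by
  induction k generalizing c with
  | zero => simp
  | succ k ih =>
    rw [Function.iterate_succ_apply, pdM_laplaceIntegral μ hL p hc,
      ih (c := fun x => c x * L x _) (hc.mul (hL.clm_apply continuous_const))]
    simp only [pow_succ, mul_assoc, mul_comm (L _ _)]

theorem foldr_iterate_pdM_laplaceIntegral (hL : Continuous L) (ν : (Fin n × Fin n) →₀ ℕ)
    (l : List (Fin n × Fin n)) {c : X → ℂ} (hc : Continuous c) :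
    l.foldr (fun p acc => (pdM p)^[ν p] ∘ acc) id (laplaceIntegral μ L c) =
      laplaceIntegral μ L
        (fun x => c x * (l.map fun p => L x (Matrix.single p.1 p.2 1) ^ ν p).prod) := by
  induction l with
  | nil => simp
  | cons p l ih =>
    have hprod : Continuous fun x => (l.map fun p => L x (Matrix.single p.1 p.2 1) ^ ν p).prod :=
      continuous_list_prod l fun p _ => (hL.clm_apply continuous_const).pow _
    rw [List.foldr_cons, Function.comp_apply, ih, iterate_pdM_laplaceIntegral μ hL p _
      (c := fun x => c x * _) (hc.mul hprod)]
    simp only [List.map_cons, List.prod_cons, mul_assoc, mul_comm (_ ^ ν p)]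

theorem diffOpM_laplaceIntegral (hL : Continuous L) (ν : (Fin n × Fin n) →₀ ℕ)
    {c : X → ℂ} (hc : Continuous c) :
    diffOpM ν (laplaceIntegral μ L c) =
      laplaceIntegral μ L (fun x => c x * ∏ p, L x (Matrix.single p.1 p.2 1) ^ ν p) := by
  simp only [diffOpM, foldr_iterate_pdM_laplaceIntegral μ hL ν _ hc, Finset.prod_map_toList]

theorem applyDiffM_laplaceIntegral (hL : Continuous L) (F : MvPolynomial (Fin n × Fin n) ℂ)
    {c : X → ℂ} (hc : Continuous c) :
    applyDiffM F (laplaceIntegral μ L c) =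
      laplaceIntegral μ L (fun x => c x * eval (fun p => L x (Matrix.single p.1 p.2 1)) F) := by
  funext z
  have hint (ν : (Fin n × Fin n) →₀ ℕ) : Integrable (fun x => coeff ν F *
      (c x * ∏ p, L x (Matrix.single p.1 p.2 1) ^ ν p) * Complex.exp (L x z)) μ := by
    refine Continuous.integrable_of_compactSpace μ ?_
    have hLz := hL.clm_apply (continuous_const (y := z))
    fun_prop
  calc applyDiffM F (laplaceIntegral μ L c) z
      = ∑ ν ∈ F.support, coeff ν F * diffOpM ν (laplaceIntegral μ L c) z := rfl
    _ = ∑ ν ∈ F.support, ∫ x, coeff ν F *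
          (c x * ∏ p, L x (Matrix.single p.1 p.2 1) ^ ν p) * Complex.exp (L x z) ∂μ := by
      simp only [diffOpM_laplaceIntegral μ hL _ hc, laplaceIntegral, ← integral_const_mul,
        mul_assoc]
    _ = laplaceIntegral μ L
          (fun x => c x * eval (fun p => L x (Matrix.single p.1 p.2 1)) F) z := by
      rw [← integral_finsetSum _ fun ν _ => hint ν]
      simp only [laplaceIntegral, eval_eq', Finset.mul_sum, Finset.sum_mul]
      congr 1 with x
      exact Finset.sum_congr rfl fun ν _ => by ring

theorem applyDiffM_laplaceIntegral_of_eval_eq (hL : Continuous L)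
    {F : MvPolynomial (Fin n × Fin n) ℂ} {e : ℂ}
    (hF : ∀ x, eval (fun p => L x (Matrix.single p.1 p.2 1)) F = e) {c : X → ℂ}
    (hc : Continuous c) (z : Matrix (Fin n) (Fin n) ℂ) :
    applyDiffM F (laplaceIntegral μ L c) z = e * laplaceIntegral μ L c z := by
  simp only [applyDiffM_laplaceIntegral μ hL F hc, laplaceIntegral, hF, ← integral_const_mul,
    mul_left_comm e, mul_assoc]

end MatrixLaplaceIntegral

section TraceForm

attribute [local instance] matrixNormTopology

noncomputable def traceForm {n : ℕ} (B : Matrix (Fin n) (Fin n) ℂ) :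
    Matrix (Fin n) (Fin n) ℂ →L[ℂ] ℂ :=
  LinearMap.toContinuousLinearMap (Matrix.traceLinearMap _ ℂ ℂ ∘ₗ LinearMap.mulRight ℂ B)

theorem traceForm_apply {n : ℕ} (B z : Matrix (Fin n) (Fin n) ℂ) :
    traceForm B z = (z * B).trace :=
  rfl

theorem traceForm_single {n : ℕ} (B : Matrix (Fin n) (Fin n) ℂ) (i j : Fin n) :
    traceForm B (Matrix.single i j 1) = B j i := by
  rw [traceForm_apply, Matrix.trace_single_mul, one_smul]

theorem Continuous.traceForm {X : Type*} [TopologicalSpace X] {n : ℕ}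
    {B : X → Matrix (Fin n) (Fin n) ℂ} (hB : Continuous B) :
    Continuous fun x => _root_.traceForm (B x) := by
  refine continuous_clm_apply.mpr fun z => ?_
  simp only [traceForm_apply]
  exact (continuous_const.matrix_mul hB).matrix_trace

theorem eval_traceForm_single {n : ℕ} (B : Matrix (Fin n) (Fin n) ℂ)
    (F : MvPolynomial (Fin n × Fin n) ℂ) :
    eval (fun p => traceForm B (Matrix.single p.1 p.2 1)) F = evalMat F Bᵀ := by
  simp only [traceForm_single, evalMat, Matrix.transpose_apply]

end TraceForm

instance (n : ℕ) : BorelSpace (Matrix.unitaryGroup (Fin n) ℂ) := ⟨rfl⟩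

instance (n : ℕ) : CompactSpace (Matrix.unitaryGroup (Fin n) ℂ) := by
  refine isCompact_iff_compactSpace.mp (IsCompact.of_isClosed_subset
    (isCompact_univ_pi fun _ => isCompact_univ_pi fun _ => isCompact_closedBall (0 : ℂ) 1)
    isClosed_unitary fun u hu i _ j _ => ?_)
  simpa using entry_norm_bound_of_unitary hu i j

section UnitaryConjugation

variable {n : ℕ}

local notation "𝕄" => Matrix (Fin n) (Fin n) ℂ

def conjByUnitary (u : Matrix.unitaryGroup (Fin n) ℂ) (B : 𝕄) : 𝕄 :=
  (u : 𝕄) * B * (↑(u⁻¹) : 𝕄)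

theorem continuous_conjByUnitary (B : 𝕄) :
    Continuous fun u : Matrix.unitaryGroup (Fin n) ℂ => conjByUnitary u B :=
  (continuous_subtype_val.matrix_mul continuous_const).matrix_mul
    (continuous_subtype_val.comp continuous_inv)

theorem trace_inv_mul_mul_mul_eq_traceForm (u : Matrix.unitaryGroup (Fin n) ℂ) (z B : 𝕄) :
    ((↑(u⁻¹) : 𝕄) * z * (u : 𝕄) * B).trace = traceForm (conjByUnitary u B) z := by
  simp only [traceForm_apply, conjByUnitary, Matrix.mul_assoc]
  rw [Matrix.trace_mul_comm]
  simp only [Matrix.mul_assoc]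

theorem evalMat_transpose_conjByUnitary {F : MvPolynomial (Fin n × Fin n) ℂ}
    (hF : ∀ g : Matrix.GeneralLinearGroup (Fin n) ℂ, ∀ z : 𝕄,
      evalMat F ((↑(g⁻¹) : 𝕄) * z * (g : 𝕄)) = evalMat F z)
    (u : Matrix.unitaryGroup (Fin n) ℂ) (B : 𝕄) :
    evalMat F (conjByUnitary u B)ᵀ = evalMat F Bᵀ := by
  set g : Matrix.GeneralLinearGroup (Fin n) ℂ :=
    Unitary.toUnits (Matrix.UnitaryGroup.transpose u)
  have hconj : (conjByUnitary u B)ᵀ = (↑(g⁻¹) : 𝕄) * Bᵀ * (g : 𝕄) := by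
    simp [g, conjByUnitary, Matrix.transpose_mul, Matrix.mul_assoc, Matrix.UnitaryGroup.inv_val,
      Matrix.star_eq_conjTranspose, Matrix.conjTranspose_transpose_eq_transpose_conjTranspose]
  rw [hconj, hF]

end UnitaryConjugation

theorem invariant_diff_coherent_state_general (n : ℕ)
    (μ : Measure (Matrix.unitaryGroup (Fin n) ℂ))
    [IsProbabilityMeasure μ]
    (F : MvPolynomial (Fin n × Fin n) ℂ)
    (hF : ∀ g : Matrix.GeneralLinearGroup (Fin n) ℂ, ∀ z : Matrix (Fin n) (Fin n) ℂ,
      evalMat F ((↑(g⁻¹) : Matrix (Fin n) (Fin n) ℂ) * z * (↑g : Matrix (Fin n) (Fin n) ℂ)) =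
        evalMat F z)
    (Q : Matrix (Fin n) (Fin n) ℂ → Matrix (Fin n) (Fin n) ℂ → ℂ)
    (hQ : ∀ a z, Q a z = ∫ u : Matrix.unitaryGroup (Fin n) ℂ,
      Complex.exp (((↑(u⁻¹) : Matrix (Fin n) (Fin n) ℂ) * z *
        (↑u : Matrix (Fin n) (Fin n) ℂ) * Matrix.conjTranspose a).trace) ∂μ) :
    ∀ a z, applyDiffM F (Q a) z =
      eval (fun p : Fin n × Fin n => (starRingEnd ℂ) (a p.1 p.2)) F * Q a z := by
  intro a z
  have hQa : Q a = laplaceIntegral μ (fun u => traceForm (conjByUnitary u aᴴ)) 1 := by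
    funext w
    simp only [hQ, laplaceIntegral, Pi.one_apply, one_mul, trace_inv_mul_mul_mul_eq_traceForm]
  rw [hQa]
  exact applyDiffM_laplaceIntegral_of_eval_eq μ (continuous_conjByUnitary aᴴ).traceForm
    (fun u => (eval_traceForm_single _ F).trans (evalMat_transpose_conjByUnitary hF u aᴴ))
    continuous_const z

/-- Coherent states are joint eigenfunctions of invariant differentiation: for a
conjugation-invariant polynomial `F` on `M_n(ℂ)` and the projected coherent state
`Q_a(z) = ∫_{U(n)} e^{Tr(u⁻¹ z u a*)} du`, one has `F(∂/∂z) Q_a = F(conj a) Q_a`. -/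
theorem invariant_diff_coherent_state (n : ℕ)
    (μ : Measure (Matrix.unitaryGroup (Fin n) ℂ))
    [μ.IsHaarMeasure] [IsProbabilityMeasure μ]
    (F : MvPolynomial (Fin n × Fin n) ℂ)
    (hF : ∀ g : Matrix.GeneralLinearGroup (Fin n) ℂ, ∀ z : Matrix (Fin n) (Fin n) ℂ,
      evalMat F ((↑(g⁻¹) : Matrix (Fin n) (Fin n) ℂ) * z * (↑g : Matrix (Fin n) (Fin n) ℂ)) =
        evalMat F z)
    (Q : Matrix (Fin n) (Fin n) ℂ → Matrix (Fin n) (Fin n) ℂ → ℂ)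
    (hQ : ∀ a z, Q a z = ∫ u : Matrix.unitaryGroup (Fin n) ℂ,
      Complex.exp (((↑(u⁻¹) : Matrix (Fin n) (Fin n) ℂ) * z *
        (↑u : Matrix (Fin n) (Fin n) ℂ) * Matrix.conjTranspose a).trace) ∂μ) :
    ∀ a z, applyDiffM F (Q a) z =
      eval (fun p : Fin n × Fin n => (starRingEnd ℂ) (a p.1 p.2)) F * Q a z :=
  invariant_diff_coherent_state_general n μ F hF Q hQ
end
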